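/- For any admissible sequence of partitions (𝒜_n) of a metric space (A, ρ), and any ε > 0, one has sup_{a ∈ A} Σ_{n≥0} 2^{n/2} diam(𝒜_n(a)) ≥ (1/√2) · ε · √(log N(A, ρ, ε)). Consequently γ₂(A, ρ) ≥ (1/√2) · ε · √(log N(A, ρ, ε)) for every ε > 0. -/

import Mathlib

open Set ENNReal

variable (α : Type*) [PseudoMetricSpace α]

/-- Covering number of the whole space at scale `ε` (junk value `0` if no finite cover
exists). -/
noncomputable def coveringNumber (ε : ℝ) : ℕ :=
  sInf {n : ℕ | ∃ C : Finset α, (∀ a : α, ∃ c ∈ C, dist a c ≤ ε) ∧ C.card = n}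

variable {α}

/-- An admissible sequence of partitions: an increasing sequence of partitions with
`|𝒜 0| = 1` and `|𝒜 n| ≤ 2 ^ (2 ^ n)` for `n ≥ 1`. -/
def IsAdmissible (𝒜 : ℕ → Set (Set α)) : Prop :=
  (∀ n, Setoid.IsPartition (𝒜 n)) ∧ (𝒜 0).encard = 1 ∧
    (∀ n, 1 ≤ n → (𝒜 n).encard ≤ 2 ^ (2 ^ n)) ∧
    (∀ n, ∀ B ∈ 𝒜 (n + 1), ∃ C ∈ 𝒜 n, B ⊆ C)

/-- A cell selector for `𝒜`: `c n a` is the cell of the partition `𝒜 n` containing `a`. -/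
def IsCellOf (𝒜 : ℕ → Set (Set α)) (c : ℕ → α → Set α) : Prop :=
  ∀ n a, c n a ∈ 𝒜 n ∧ a ∈ c n a

variable (α) in
/-- Talagrand's functional
`γ₂ = inf sup_a Σ_n 2^{n/2} diam(𝒜_n(a))`, the infimum being over admissible
sequences of partitions. -/
noncomputable def gamma2 : ℝ≥0∞ :=
  ⨅ (p : {p : (ℕ → Set (Set α)) × (ℕ → α → Set α) //
      IsAdmissible p.1 ∧ IsCellOf p.1 p.2}),
    ⨆ a : α, ∑' n : ℕ, (2 : ℝ≥0∞) ^ ((n : ℝ) / 2) * EMetric.diam (p.1.2 n a)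


/-!
Let `k` be the first level of the admissible sequence all of whose cells have diameter at most
`ε`. One point from each of these cells is an `ε`-net, so `N(ε) ≤ |𝒜_k| ≤ 2^{2^k}`, that is
`log N(ε) ≤ 2^k`. For `k > 0` some cell of level `k - 1` has diameter `> ε`, and that single term
of the series already gives `2^{(k-1)/2} ε ≥ ε √(log N(ε)) / √2`; for `k = 0` we have `N(ε) ≤ 1`.
If there is no such `k`, the series is unbounded.
-/

section Partitions

variable {X : Type*} {𝒜 : ℕ → Set (Set X)}

lemma IsAdmissible.encard_le (hA : IsAdmissible 𝒜) (n : ℕ) : (𝒜 n).encard ≤ 2 ^ 2 ^ n := by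
  rcases n.eq_zero_or_pos with rfl | hn
  · rw [hA.2.1]
    norm_num
  · exact hA.2.2.1 n hn

lemma IsCellOf.eq_of_mem {c : ℕ → X → Set X} (hc : IsCellOf 𝒜 c)
    (hA : ∀ n, Setoid.IsPartition (𝒜 n)) {n : ℕ} {B : Set X} (hB : B ∈ 𝒜 n) {a : X}
    (ha : a ∈ B) : c n a = B := by
  obtain ⟨_, _, hunique⟩ := (hA n).2 a
  rw [hunique _ (hc n a), hunique _ ⟨hB, ha⟩]

end Partitions

section LowerBound

variable {ε : ℝ}

lemma coveringNumber_le_card {C : Finset α} (hC : ∀ a : α, ∃ c ∈ C, dist a c ≤ ε) :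
    coveringNumber α ε ≤ C.card :=
  Nat.sInf_le ⟨C, hC, rfl⟩

lemma coveringNumber_le_of_isPartition (hε : 0 ≤ ε) {P : Set (Set α)}
    (hP : Setoid.IsPartition P) {m : ℕ} (hcard : P.encard ≤ m)
    (hdiam : ∀ B ∈ P, Metric.ediam B ≤ ENNReal.ofReal ε) :
    coveringNumber α ε ≤ m := by
  classical
  have hfin : P.Finite := Set.finite_of_encard_le_coe hcard
  choose pt hpt using fun B (hB : B ∈ P) => Setoid.nonempty_of_mem_partition hP hB
  let C : Finset α := hfin.toFinset.attach.image fun B => pt B.1 (hfin.mem_toFinset.1 B.2)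
  have hnet : ∀ a : α, ∃ c ∈ C, dist a c ≤ ε := by
    intro a
    obtain ⟨B, ⟨hB, haB⟩, _⟩ := hP.2 a
    refine ⟨pt B hB, Finset.mem_image.2 ⟨⟨B, hfin.mem_toFinset.2 hB⟩, Finset.mem_attach _ _, rfl⟩,
      ?_⟩
    rw [← ENNReal.ofReal_le_ofReal_iff hε, ← edist_dist]
    exact (Metric.edist_le_ediam_of_mem haB (hpt B hB)).trans (hdiam B hB)
  calc coveringNumber α ε ≤ C.card := coveringNumber_le_card hnet
    _ ≤ hfin.toFinset.attach.card := Finset.card_image_le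
    _ = hfin.toFinset.card := Finset.card_attach
    _ ≤ m := by
      rw [hfin.encard_eq_coe_toFinset_card] at hcard
      exact_mod_cast hcard

lemma log_le_two_pow_of_le_two_pow_two_pow {N n : ℕ} (hN : N ≤ 2 ^ 2 ^ n) :
    Real.log N ≤ 2 ^ n := by
  rcases N.eq_zero_or_pos with rfl | hpos
  · simp
  calc Real.log N ≤ Real.log ((2 : ℝ) ^ 2 ^ n) :=
        Real.log_le_log (by exact_mod_cast hpos) (by exact_mod_cast hN)
    _ = 2 ^ n * Real.log 2 := by rw [Real.log_pow]; push_cast; ring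
    _ ≤ 2 ^ n * 1 := by
        gcongr
        linarith [Real.log_two_lt_d9]
    _ = 2 ^ n := mul_one _

lemma ofReal_mul_sqrt_two_pow_succ_div_sqrt_two (hε : 0 ≤ ε) (k : ℕ) :
    ENNReal.ofReal (ε * Real.sqrt (2 ^ (k + 1)) / Real.sqrt 2) =
      (2 : ℝ≥0∞) ^ ((k : ℝ) / 2) * ENNReal.ofReal ε := by
  have hsqrt : Real.sqrt (2 ^ k) = (2 : ℝ) ^ ((k : ℝ) / 2) := by
    rw [Real.sqrt_eq_rpow, ← Real.rpow_natCast, ← Real.rpow_mul zero_le_two]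
    ring_nf
  have hsqrt2 : Real.sqrt 2 ≠ 0 := by positivity
  rw [pow_succ, Real.sqrt_mul (by positivity), mul_div_assoc, mul_div_cancel_right₀ _ hsqrt2,
    hsqrt, ENNReal.ofReal_mul hε, ← ENNReal.ofReal_rpow_of_pos zero_lt_two, ENNReal.ofReal_ofNat,
    mul_comm]

noncomputable def chainingFunctional (c : ℕ → α → Set α) : ℝ≥0∞ :=
  ⨆ a : α, ∑' n : ℕ, (2 : ℝ≥0∞) ^ ((n : ℝ) / 2) * Metric.ediam (c n a)

section chainingFunctional

variable {𝒜 : ℕ → Set (Set α)} {c : ℕ → α → Set α}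

lemma rpow_mul_ediam_le_chainingFunctional (hA : IsAdmissible 𝒜) (hc : IsCellOf 𝒜 c) {n : ℕ}
    {B : Set α} (hB : B ∈ 𝒜 n) :
    (2 : ℝ≥0∞) ^ ((n : ℝ) / 2) * Metric.ediam B ≤ chainingFunctional c := by
  obtain ⟨a, ha⟩ := Setoid.nonempty_of_mem_partition (hA.1 n) hB
  rw [← hc.eq_of_mem hA.1 hB ha]
  exact (ENNReal.le_tsum n).trans
    (le_iSup (fun a => ∑' n : ℕ, (2 : ℝ≥0∞) ^ ((n : ℝ) / 2) * Metric.ediam (c n a)) a)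

lemma rpow_mul_ofReal_le_chainingFunctional (hA : IsAdmissible 𝒜) (hc : IsCellOf 𝒜 c) {n : ℕ}
    {B : Set α} (hB : B ∈ 𝒜 n) (hdiam : ENNReal.ofReal ε < Metric.ediam B) :
    (2 : ℝ≥0∞) ^ ((n : ℝ) / 2) * ENNReal.ofReal ε ≤ chainingFunctional c :=
  (mul_le_mul_right hdiam.le _).trans (rpow_mul_ediam_le_chainingFunctional hA hc hB)

/-- Level `2m` contributes at least `2^m ε ≥ m ε`. -/
lemma chainingFunctional_eq_top_of_forall_exists_lt_ediam (hε : 0 < ε) (hA : IsAdmissible 𝒜)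
    (hc : IsCellOf 𝒜 c) (hcoarse : ∀ n, ∃ B ∈ 𝒜 n, ENNReal.ofReal ε < Metric.ediam B) :
    chainingFunctional c = ⊤ := by
  have hmul : ∀ m : ℕ, (m : ℝ≥0∞) * ENNReal.ofReal ε ≤ chainingFunctional c := by
    intro m
    obtain ⟨B, hB, hdiam⟩ := hcoarse (2 * m)
    refine le_trans ?_ (rpow_mul_ofReal_le_chainingFunctional hA hc hB hdiam)
    gcongr
    rw [Nat.cast_mul, Nat.cast_ofNat, mul_div_cancel_left₀ _ two_ne_zero, ENNReal.rpow_natCast]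
    exact_mod_cast Nat.lt_two_pow_self.le
  rw [eq_top_iff, ← ENNReal.top_mul (ENNReal.ofReal_pos.2 hε).ne', ← ENNReal.iSup_natCast,
    ENNReal.iSup_mul]
  exact iSup_le hmul

theorem ofReal_le_chainingFunctional (hε : 0 < ε) (hA : IsAdmissible 𝒜) (hc : IsCellOf 𝒜 c) :
    ENNReal.ofReal (ε * Real.sqrt (Real.log (coveringNumber α ε)) / Real.sqrt 2) ≤
      chainingFunctional c := by
  classical
  by_cases hfine : ∃ n, ∀ B ∈ 𝒜 n, Metric.ediam B ≤ ENNReal.ofReal ε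
  swap
  · push Not at hfine
    rw [chainingFunctional_eq_top_of_forall_exists_lt_ediam hε hA hc hfine]
    exact le_top
  cases hk : Nat.find hfine with
  | zero =>
    have hN : coveringNumber α ε ≤ 1 :=
      coveringNumber_le_of_isPartition hε.le (hA.1 0) (by rw [hA.2.1]; norm_num)
        (hk ▸ Nat.find_spec hfine)
    interval_cases coveringNumber α ε <;> simp
  | succ k =>
    have hN : coveringNumber α ε ≤ 2 ^ 2 ^ (k + 1) :=
      coveringNumber_le_of_isPartition hε.le (hA.1 _) (mod_cast hA.encard_le _)
        (hk ▸ Nat.find_spec hfine)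
    obtain ⟨B, hB, hdiam⟩ : ∃ B ∈ 𝒜 k, ENNReal.ofReal ε < Metric.ediam B := by
      simpa using Nat.find_min hfine (hk ▸ k.lt_succ_self)
    calc ENNReal.ofReal (ε * Real.sqrt (Real.log (coveringNumber α ε)) / Real.sqrt 2)
        ≤ ENNReal.ofReal (ε * Real.sqrt (2 ^ (k + 1)) / Real.sqrt 2) := by
          gcongr
          exact log_le_two_pow_of_le_two_pow_two_pow hN
      _ = (2 : ℝ≥0∞) ^ ((k : ℝ) / 2) * ENNReal.ofReal ε :=
          ofReal_mul_sqrt_two_pow_succ_div_sqrt_two hε.le k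
      _ ≤ chainingFunctional c := rpow_mul_ofReal_le_chainingFunctional hA hc hB hdiam

end chainingFunctional

end LowerBound

/-- For any admissible sequence of partitions and any `ε > 0`,
`sup_a Σ_n 2^{n/2} diam(𝒜_n(a)) ≥ ε √(log N(A, ρ, ε)) / √2`; consequently the same
lower bound holds for `γ₂(A, ρ)`. -/
theorem gamma2_lower_bound {ε : ℝ} (hε : 0 < ε) :
    (∀ (𝒜 : ℕ → Set (Set α)) (c : ℕ → α → Set α), IsAdmissible 𝒜 → IsCellOf 𝒜 c →
      ENNReal.ofReal (ε * Real.sqrt (Real.log (coveringNumber α ε)) / Real.sqrt 2) ≤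
        ⨆ a : α, ∑' n : ℕ, (2 : ℝ≥0∞) ^ ((n : ℝ) / 2) * EMetric.diam (c n a)) ∧
    ENNReal.ofReal (ε * Real.sqrt (Real.log (coveringNumber α ε)) / Real.sqrt 2) ≤
      gamma2 α :=
  ⟨fun _ _ hA hc => ofReal_le_chainingFunctional hε hA hc,
    le_iInf fun p => ofReal_le_chainingFunctional hε p.2.1 p.2.2⟩
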